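/- Let V and Q be real inner product spaces and B : V → Q → ℝ a bilinear map. Suppose (λ₁, u₁, p₁) and (λ₂, u₂, p₂) are least-squares eigensolutions. Then ⟪u₁, u₂⟫_V = (1 + λ₁) ⟪p₂, p₁⟫_Q, and consequently (λ₁ + 1) ⟪p₂, p₁⟫_Q = (λ₂ + 1) ⟪p₁, p₂⟫_Q. (This is the key identity in the proof of the orthogonality Proposition 3.6.) -/
import Mathlib

open scoped RealInnerProductSpace

/-- `(λ, u, p)` is a least-squares eigensolution:
`⟪u, v⟫_V − B v p = λ ⬝ B v p` for all `v`, and `⟪p, q⟫_Q = B u q` for all `q`. -/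
def IsLSEigensolution {V Q : Type*} [NormedAddCommGroup V] [InnerProductSpace ℝ V]
    [NormedAddCommGroup Q] [InnerProductSpace ℝ Q]
    (B : V →ₗ[ℝ] Q →ₗ[ℝ] ℝ) (lam : ℝ) (u : V) (p : Q) : Prop :=
  (∀ v : V, ⟪u, v⟫ - B v p = lam * B v p) ∧ (∀ q : Q, ⟪p, q⟫ = B u q)

/-- The key identity in the proof of the orthogonality Proposition 3.6:
`⟪u₁, u₂⟫_V = (1 + λ₁) ⟪p₂, p₁⟫_Q`, and consequently
`(λ₁ + 1) ⟪p₂, p₁⟫_Q = (λ₂ + 1) ⟪p₁, p₂⟫_Q`. -/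
theorem ls_eigensolution_key_identity
    {V Q : Type*} [NormedAddCommGroup V] [InnerProductSpace ℝ V]
    [NormedAddCommGroup Q] [InnerProductSpace ℝ Q]
    (B : V →ₗ[ℝ] Q →ₗ[ℝ] ℝ) (lam₁ lam₂ : ℝ) (u₁ u₂ : V) (p₁ p₂ : Q)
    (h1 : IsLSEigensolution B lam₁ u₁ p₁) (h2 : IsLSEigensolution B lam₂ u₂ p₂) :
    ⟪u₁, u₂⟫ = (1 + lam₁) * ⟪p₂, p₁⟫ ∧
      (lam₁ + 1) * ⟪p₂, p₁⟫ = (lam₂ + 1) * ⟪p₁, p₂⟫ := by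
  obtain ⟨h1a, h1b⟩ := h1
  obtain ⟨h2a, h2b⟩ := h2
  have key : ⟪u₁, u₂⟫ = (1 + lam₁) * ⟪p₂, p₁⟫ := by
    have := h1a u₂
    rw [← h2b p₁] at this
    linarith
  have key' : ⟪u₂, u₁⟫ = (1 + lam₂) * ⟪p₁, p₂⟫ := by
    have := h2a u₁
    rw [← h1b p₂] at this
    linarith
  refine ⟨key, ?_⟩
  have hc := real_inner_comm u₁ u₂
  linarith
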